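/- Let t ≥ 3, k ≥ 2, q ≥ 1 be integers and set b := ⌊(t−3)/(k−1)⌋, assuming b ≥ 2. Every graph of the form (P_t)_R^q, where R ⊊ V(P_t) and P_t − R has at least k+1 connected components, contains a theta graph θ_{q,b'} as a subgraph for some integer b' with 2 ≤ b' ≤ b. -/

import Mathlib

/-!
Order the vertices of `P_t` as `0, …, t - 1`. Representatives `x 0 < ⋯ < x k` of `k + 1`
components of `P_t - R` are pairwise separated by vertices of `R`; pick separators
`l 0 < ⋯ < l (k - 1)` in `R` with `l i` between `x i` and `x (i + 1)`. The `k - 1` windows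
`(l i, l (i + 1))` each contain a vertex `x (i + 1) ∉ R` and have total width at most `t - 3`,
so one of them has width at most `b`. Around `x (i + 1)` inside that window sit two vertices of `R`
at distance `b' ∈ [2, b]` with no vertex of `R` strictly between them: the subpath joining them
meets `R` exactly in its ends, and its `q` copies in `(P_t)_R^q` form `θ_{q,b'}`.
-/

open SimpleGraph

/-- The projection from the vertex set of the blowup `H_R^m` back to `V(H)`. -/
def blowupProj {α : Type*} (R : Set α) (m : ℕ) : (↥R ⊕ (Fin m × ↥Rᶜ)) → α :=
  Sum.elim Subtype.val (fun p => p.2.val)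

/-- Whether a vertex of `H_R^m` belongs to the `i`-th copy of `H`. -/
def blowupInCopy {α : Type*} (R : Set α) (m : ℕ) (i : Fin m) : (↥R ⊕ (Fin m × ↥Rᶜ)) → Prop :=
  Sum.elim (fun _ => True) (fun p => p.1 = i)

/-- The graph `H_R^m`: the union of `m` copies of `H` which agree on `R` and are
otherwise pairwise disjoint. -/
def blowupGraph {α : Type*} (H : SimpleGraph α) (R : Set α) (m : ℕ) :
    SimpleGraph (↥R ⊕ (Fin m × ↥Rᶜ)) where
  Adj a b := ∃ i : Fin m, blowupInCopy R m i a ∧ blowupInCopy R m i b ∧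
    H.Adj (blowupProj R m a) (blowupProj R m b)
  symm := by
    refine ⟨?_⟩
    rintro a b ⟨i, ha, hb, hadj⟩
    exact ⟨i, hb, ha, hadj.symm⟩
  loopless := by
    refine ⟨?_⟩
    rintro a ⟨i, -, -, hadj⟩
    exact H.irrefl hadj

/-- `G` contains a copy of `H_R^q`: there are `q` monomorphisms of `H` into `G` which
agree precisely on `R` and have otherwise pairwise disjoint images. -/
def ContainsBlowup {α β : Type*} (H : SimpleGraph α) (R : Set α) (q : ℕ)
    (G : SimpleGraph β) : Prop :=
  ∃ φ : Fin q → (H →g G),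
    ∀ i j : Fin q, ∀ x y : α, (φ i) x = (φ j) y ↔ x = y ∧ (i = j ∨ x ∈ R)

namespace Nat

theorem exists_gap_around {S : Set ℕ} {l x u : ℕ} (hl : l ∈ S) (hu : u ∈ S) (hlx : l < x)
    (hxu : x < u) (hx : x ∉ S) :
    ∃ a c, a ∈ S ∧ c ∈ S ∧ l ≤ a ∧ a + 2 ≤ c ∧ c ≤ u ∧ ∀ w, a < w → w < c → w ∉ S := by
  classical
  have hc : ∃ c, x < c ∧ c ∈ S := ⟨u, hxu, hu⟩
  refine ⟨findGreatest (· ∈ S) x, Nat.find hc, findGreatest_spec hlx.le hl,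
    (Nat.find_spec hc).2, le_findGreatest hlx.le hl, ?_, Nat.find_min' hc ⟨hxu, hu⟩, ?_⟩
  · have : findGreatest (· ∈ S) x ≠ x := fun h => hx (h ▸ findGreatest_spec hlx.le hl)
    have := findGreatest_le (P := (· ∈ S)) x
    have := (Nat.find_spec hc).1
    omega
  · intro w haw hwc hw
    rcases le_or_gt w x with hwx | hxw
    · exact findGreatest_is_greatest haw hwx hw
    · exact Nat.find_min hc hwc ⟨hxw, hw⟩

theorem exists_lt_add_of_lt_add_mul {f : ℕ → ℕ} {n d : ℕ} (h : f n < f 0 + n * d) :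
    ∃ i < n, f (i + 1) < f i + d := by
  by_contra! hstep
  have : ∀ m ≤ n, f 0 + m * d ≤ f m := by
    intro m hm
    induction m with
    | zero => simp
    | succ m ih =>
      have := hstep m hm
      have := ih (by omega)
      rw [add_mul, one_mul]
      omega
  exact (this n le_rfl).not_gt h

theorem exists_short_gap {S : Set ℕ} {t k : ℕ} (hk : 2 ≤ k) (x : ℕ → ℕ) (hxt : x k < t)
    (hxS : ∀ i ≤ k, x i ∉ S) (hsep : ∀ i < k, ∃ r ∈ S, x i < r ∧ r < x (i + 1)) :
    ∃ a c, a ∈ S ∧ c ∈ S ∧ a + 2 ≤ c ∧ c ≤ a + (t - 3) / (k - 1) ∧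
      ∀ w, a < w → w < c → w ∉ S := by
  choose! l hlS hxl hlx using hsep
  -- `1 ≤ l 0` and `l (k - 1) ≤ t - 2`, so the `k - 1` windows `(l i, l (i + 1))` have total
  -- width at most `t - 3 < (k - 1) * ((t - 3) / (k - 1) + 1)`
  have hwidth : l (k - 1) < l 0 + (k - 1) * ((t - 3) / (k - 1) + 1) := by
    have := Nat.lt_mul_div_succ (t - 3) (show 0 < k - 1 by omega)
    have := hxl 0 (by omega)
    have := hlx (k - 1) (by omega)
    rw [show k - 1 + 1 = k by omega] at this
    omega
  obtain ⟨i, hi, hshort⟩ := exists_lt_add_of_lt_add_mul hwidth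
  obtain ⟨a, c, ha, hc, hla, hac, hcl, hgap⟩ := exists_gap_around (hlS i (by omega))
    (hlS (i + 1) (by omega)) (hlx i (by omega)) (hxl (i + 1) (by omega)) (hxS (i + 1) (by omega))
  exact ⟨a, c, ha, hc, hac, by omega, hgap⟩

end Nat

section PathGraph

variable {t : ℕ} {R : Set (Fin t)}

theorem reachable_induce_pathGraph_of_forall_notMem {u v : ↥Rᶜ} (huv : u.1 ≤ v.1)
    (hR : ∀ w, u.1 ≤ w → w ≤ v.1 → w ∉ R) :
    ((pathGraph t).induce Rᶜ).Reachable u v := by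
  obtain ⟨n, hn⟩ := Nat.exists_eq_add_of_le (Fin.le_def.mp huv)
  induction n generalizing v with
  | zero =>
    obtain rfl : u = v := Subtype.ext (Fin.ext hn.symm)
    rfl
  | succ n ih =>
    let v' : ↥Rᶜ := ⟨⟨u.1 + n, by omega⟩,
      hR _ (Fin.le_def.mpr (by simp)) (Fin.le_def.mpr (by simp only; omega))⟩
    have hv'v : ((pathGraph t).induce Rᶜ).Adj v' v := by
      simp only [comap_adj, Function.Embedding.subtype_apply, pathGraph_adj, v']
      omega
    refine (ih (v := v') (Fin.le_def.mpr (by simp [v'])) (fun w hw hwv => hR w hw ?_) rfl).trans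
      hv'v.reachable
    rw [Fin.le_def] at hwv ⊢
    simp only [v'] at hwv
    omega

theorem exists_separated_seq_of_le_card_connectedComponent {k : ℕ}
    (hcomp : k + 1 ≤ Nat.card ((pathGraph t).induce Rᶜ).ConnectedComponent) :
    ∃ x : ℕ → ℕ, x k < t ∧ (∀ i ≤ k, x i ∉ Fin.val '' R) ∧
      ∀ i < k, ∃ r ∈ Fin.val '' R, x i < r ∧ r < x (i + 1) := by
  set rep : ((pathGraph t).induce Rᶜ).ConnectedComponent → ℕ := fun C => C.out.1.1
  have hrep : Function.Injective rep := fun C C' h => by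
    rw [← C.out_eq, ← C'.out_eq, Subtype.ext (Fin.ext h)]
  have hcard : ∀ hfin : (Set.ofPred (· ∈ Set.range rep)).Finite, k < hfin.toFinset.card := by
    intro hfin
    rw [← Set.ncard_eq_toFinset_card _ hfin]
    change k < (Set.range rep).ncard
    rw [Set.ncard_range_of_injective hrep]
    omega
  set x := Nat.nth (· ∈ Set.range rep)
  have hx : ∀ i ≤ k, ∃ C, rep C = x i := fun i hi =>
    Nat.nth_mem i fun hf => (hcard hf).trans_le' hi
  refine ⟨x, ?_, ?_, ?_⟩
  · obtain ⟨C, hC⟩ := hx k le_rfl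
    exact hC ▸ C.out.1.isLt
  · rintro i hi ⟨w, hw, hwx⟩
    obtain ⟨C, hC⟩ := hx i hi
    exact C.out.2 (Fin.ext (hwx.trans hC.symm) ▸ hw)
  · intro i hi
    obtain ⟨C, hC⟩ := hx i hi.le
    obtain ⟨C', hC'⟩ := hx (i + 1) hi
    have hlt : x i < x (i + 1) :=
      Nat.nth_lt_nth' (lt_add_one i) fun hf => (hcard hf).trans_le' hi
    simp only [rep] at hC hC'
    by_contra! hnone
    have hreach : ((pathGraph t).induce Rᶜ).Reachable C.out C'.out := by
      refine reachable_induce_pathGraph_of_forall_notMem (Fin.le_def.mpr (by omega))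
        fun w h1 h2 hw => ?_
      have hw1 : w.val ≠ C.out.1.val := fun h => C.out.2 (Fin.ext h ▸ hw)
      have hw2 : w.val ≠ C'.out.1.val := fun h => C'.out.2 (Fin.ext h ▸ hw)
      have := hnone w ⟨w, hw, rfl⟩
      rw [Fin.le_def] at h1 h2
      omega
    have := congrArg rep (C.out_eq.symm.trans ((ConnectedComponent.eq.mpr hreach).trans C'.out_eq))
    simp only [rep] at this
    omega

end PathGraph

section Blowup

variable {α β : Type*}

open Classical in
noncomputable def blowupCopy (R : Set α) (m : ℕ) (i : Fin m) (x : α) :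
    ↥R ⊕ (Fin m × ↥Rᶜ) :=
  if h : x ∈ R then .inl ⟨x, h⟩ else .inr (i, ⟨x, h⟩)

theorem blowupProj_blowupCopy (R : Set α) (m : ℕ) (i : Fin m) (x : α) :
    blowupProj R m (blowupCopy R m i x) = x := by
  unfold blowupCopy; split_ifs <;> rfl

theorem blowupInCopy_blowupCopy (R : Set α) (m : ℕ) (i : Fin m) (x : α) :
    blowupInCopy R m i (blowupCopy R m i x) := by
  unfold blowupCopy; split_ifs <;> simp [blowupInCopy]

theorem blowupCopy_eq_blowupCopy_iff {R : Set α} {m : ℕ} {i j : Fin m} {x y : α} :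
    blowupCopy R m i x = blowupCopy R m j y ↔ x = y ∧ (i = j ∨ x ∈ R) := by
  unfold blowupCopy
  split_ifs <;> grind

noncomputable def blowupCopyHom (H : SimpleGraph α) (R : Set α) (m : ℕ) (i : Fin m) :
    H →g blowupGraph H R m where
  toFun := blowupCopy R m i
  map_rel' h := ⟨i, blowupInCopy_blowupCopy .., blowupInCopy_blowupCopy ..,
    by simpa only [blowupProj_blowupCopy] using h⟩

theorem containsBlowup_blowupGraph_of_injective {H : SimpleGraph α} {G : SimpleGraph β}
    (φ : H →g G) (hφ : Function.Injective φ) (R : Set β) (q : ℕ) :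
    ContainsBlowup H (φ ⁻¹' R) q (blowupGraph G R q) :=
  ⟨fun i => (blowupCopyHom G R q i).comp φ, fun _ _ _ _ =>
    blowupCopy_eq_blowupCopy_iff.trans (by rw [hφ.eq_iff, Set.mem_preimage])⟩

end Blowup

def pathGraphShift {m t : ℕ} (a : ℕ) (h : a + m ≤ t) : pathGraph m ↪g pathGraph t where
  toFun v := ⟨a + v, by omega⟩
  inj' u v huv := Fin.ext (by simpa using huv)
  map_rel_iff' {u v} := by
    change (pathGraph t).Adj ⟨a + u, _⟩ ⟨a + v, _⟩ ↔ _
    simp only [pathGraph_adj]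
    omega

@[simp]
theorem val_pathGraphShift_apply {m t : ℕ} (a : ℕ) (h : a + m ≤ t) (v : Fin m) :
    (pathGraphShift a h v).val = a + v :=
  rfl

theorem preimage_pathGraphShift_eq_ends {t : ℕ} {R : Set (Fin t)} {a c : Fin t}
    (hac : a ≤ c) (ha : a ∈ R) (hc : c ∈ R)
    (hgap : ∀ w : Fin t, a < w → w < c → w ∉ R) :
    pathGraphShift (m := c.val - a.val + 1) a (by omega) ⁻¹' R =
      {v | v = 0 ∨ v = Fin.last (c.val - a.val)} := by
  ext v
  constructor
  · intro hvR
    by_contra hend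
    have h0 : v.val ≠ 0 := fun h => hend (.inl (Fin.ext h))
    have hl : v.val ≠ c.val - a.val := fun h => hend (.inr (Fin.ext h))
    exact hgap _ (Fin.lt_def.mpr (show a.val < a + v by omega))
      (Fin.lt_def.mpr (show a.val + v < c by omega)) hvR
  · rintro (rfl | rfl)
    · rwa [Set.mem_preimage, show pathGraphShift _ _ 0 = a from Fin.ext (by simp)]
    · rwa [Set.mem_preimage,
        show pathGraphShift _ _ (Fin.last _) = c from Fin.ext (by simp; omega)]

theorem family_member_contains_theta_general (t k q : ℕ) (hk : 2 ≤ k)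
    (R : Set (Fin t))
    (hcomp : k + 1 ≤ Nat.card ((pathGraph t).induce Rᶜ).ConnectedComponent) :
    ∃ b' : ℕ, 2 ≤ b' ∧ b' ≤ (t - 3) / (k - 1) ∧
      ContainsBlowup (pathGraph (b' + 1)) {v : Fin (b' + 1) | v = 0 ∨ v = Fin.last b'} q
        (blowupGraph (pathGraph t) R q) := by
  obtain ⟨x, hxt, hxR, hsep⟩ := exists_separated_seq_of_le_card_connectedComponent hcomp
  obtain ⟨_, _, ⟨a, ha, rfl⟩, ⟨c, hc, rfl⟩, hac, hcb, hgap⟩ :=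
    Nat.exists_short_gap hk x hxt hxR hsep
  have hac' : a ≤ c := Fin.le_def.mpr (by omega)
  refine ⟨c.val - a.val, by omega, by omega, ?_⟩
  rw [← preimage_pathGraphShift_eq_ends hac' ha hc
    fun w h1 h2 hw => hgap w h1 h2 ⟨w, hw, rfl⟩]
  exact containsBlowup_blowupGraph_of_injective (pathGraphShift (t := t) a (by omega)).toHom
    (RelEmbedding.injective _) R q

/-- Let `b := ⌊(t−3)/(k−1)⌋ ≥ 2`. Every graph `(P_t)_R^q` with `R ⊊ V(P_t)` such that
`P_t − R` has at least `k+1` connected components contains a theta graph `θ_{q,b'}`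
(which is `(P_{b'+1})` blown up `q` times over its two endpoints) for some `2 ≤ b' ≤ b`. -/
theorem family_member_contains_theta (t k q : ℕ) (ht : 3 ≤ t) (hk : 2 ≤ k) (hq : 1 ≤ q)
    (hb : 2 ≤ (t - 3) / (k - 1))
    (R : Set (Fin t)) (hR : R ≠ Set.univ)
    (hcomp : k + 1 ≤ Nat.card ((pathGraph t).induce Rᶜ).ConnectedComponent) :
    ∃ b' : ℕ, 2 ≤ b' ∧ b' ≤ (t - 3) / (k - 1) ∧
      ContainsBlowup (pathGraph (b' + 1)) {v : Fin (b' + 1) | v = 0 ∨ v = Fin.last b'} q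
        (blowupGraph (pathGraph t) R q) :=
  family_member_contains_theta_general t k q hk R hcomp
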